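/- arXiv:2204.00199 — 2 statements merged into one kernel-verified Lean document; each statement's English description precedes it below -/
import Mathlib

section
/- For an m-vertex directed cycle 1→2→⋯→m→1 (m ≥ 2), there exist real matrices C_1,…,C_m, each with n columns and each with nonzero kernel, such that the relations C_i(x_i − x_{i−1}) = 0 for all i ∈ {1,…,m} (indices mod m) imply x_1 = ⋯ = x_m for all x_1,…,x_m ∈ ℝ^n, if and only if m ≤ n. -/
/-!
Write `d i = x i - x (i - 1)`. These differences always sum to zero, and conversely every family
summing to zero arises from some `x` (take partial sums). So the cycle is well-configured exactly
when `∑ d i = 0` with `d i ∈ ker C i` forces every `d i = 0`, i.e. when the kernels are independent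
subspaces. Picking a nonzero vector in each kernel then gives `m` linearly independent vectors of
`ℝⁿ`, whence `m ≤ n`; conversely, for `m ≤ n` the lines spanned by `m` standard basis vectors are
independent, and every subspace is the kernel of a matrix.
-/

open Module

namespace Fin
open Fin.NatCast
variable {m : ℕ} [NeZero m]

theorem eq_of_forall_eq_sub_one {α : Type*} {x : Fin m → α} (h : ∀ i, x i = x (i - 1))
    (i j : Fin m) : x i = x j := by
  have h_nat : ∀ k : ℕ, x k = x 0 := by
    intro k
    induction k with
    | zero => simp
    | succ k ih => rw [h, Nat.cast_succ, add_sub_cancel_right, ih]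
  rw [← cast_val_eq_self i, ← cast_val_eq_self j, h_nat, h_nat]

variable {M : Type*} [AddCommGroup M]

theorem sum_sub_sub_one (x : Fin m → M) : ∑ i, (x i - x (i - 1)) = 0 := by
  rw [Finset.sum_sub_distrib, sub_eq_zero]
  exact ((Equiv.subRight 1).sum_comp x).symm

theorem exists_forall_sub_sub_one_eq {d : Fin m → M} (hd : ∑ i, d i = 0) :
    ∃ x : Fin m → M, ∀ i, x i - x (i - 1) = d i := by
  obtain ⟨m, rfl⟩ := Nat.exists_eq_add_one.2 (NeZero.pos m)
  set S : ℕ → M := fun k => ∑ i ∈ Finset.range k, d i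
  have hS : S (m + 1) = 0 := by
    simp only [S, ← Fin.sum_univ_eq_sum_range (fun i => d i), cast_val_eq_self, hd]
  refine ⟨fun j => S (j.val + 1), fun j => ?_⟩
  rcases Fin.eq_zero_or_eq_succ j with rfl | ⟨j, rfl⟩
  · simp [S, hS]
  · rw [← coeSucc_eq_succ, add_sub_cancel_right]
    simp [S, Finset.sum_range_succ]

end Fin

theorem iSupIndep_iff_sum_eq_zero_imp_eq_zero {ι R M : Type*} [Fintype ι] [Ring R]
    [AddCommGroup M] [Module R M] (p : ι → Submodule R M) :
    iSupIndep p ↔ ∀ v : ι → M, (∀ i, v i ∈ p i) → ∑ i, v i = 0 → ∀ i, v i = 0 := by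
  classical
  rw [iSupIndep_iff_finsetSum_eq_zero_imp_eq_zero]
  refine ⟨fun h v hv hsum i => h Finset.univ v (fun i _ => hv i) hsum i (Finset.mem_univ i),
    fun h s v hv hsum i hi => ?_⟩
  have hv' : ∀ j, (if j ∈ s then v j else 0) ∈ p j := fun j => by
    split_ifs with hj
    exacts [hv j hj, zero_mem _]
  simpa [hi] using h _ hv' (by simpa [Finset.sum_ite_mem] using hsum) i

section Cycle

variable {m : ℕ} [NeZero m] {R M : Type*} [Ring R] [AddCommGroup M] [Module R M]

def CycleWellConfigured (K : Fin m → Submodule R M) : Prop :=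
  ∀ x : Fin m → M, (∀ i, x i - x (i - 1) ∈ K i) → ∀ i j, x i = x j

theorem cycleWellConfigured_iff_iSupIndep (K : Fin m → Submodule R M) :
    CycleWellConfigured K ↔ iSupIndep K := by
  rw [iSupIndep_iff_sum_eq_zero_imp_eq_zero]
  constructor
  · intro hK d hd hsum i
    obtain ⟨x, hx⟩ := Fin.exists_forall_sub_sub_one_eq hsum
    have hconst := hK x fun j => hx j ▸ hd j
    rw [← hx, hconst i (i - 1), sub_self]
  · intro hK x hx
    exact Fin.eq_of_forall_eq_sub_one fun i => sub_eq_zero.1 (hK _ hx (Fin.sum_sub_sub_one x) i)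

end Cycle

theorem iSupIndep.card_le_finrank_of_ne_bot {ι R M : Type*} [Fintype ι] [CommRing R]
    [IsDomain R] [AddCommGroup M] [Module R M] [IsTorsionFree R M] [Module.Finite R M]
    {p : ι → Submodule R M} (hp : iSupIndep p) (hne : ∀ i, p i ≠ ⊥) :
    Fintype.card ι ≤ finrank R M := by
  choose v hv hv0 using fun i => (Submodule.ne_bot_iff (p i)).1 (hne i)
  exact (hp.linearIndependent p hv hv0).fintype_card_le_finrank

theorem exists_iSupIndep_ne_bot (R : Type*) [Ring R] [Nontrivial R] {m n : ℕ} (h : m ≤ n) :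
    ∃ p : Fin m → Submodule R (Fin n → R), iSupIndep p ∧ ∀ i, p i ≠ ⊥ := by
  set v : Fin m → Fin n → R := fun i => Pi.single (Fin.castLE h i) 1
  have hv : LinearIndependent R v :=
    (Pi.linearIndependent_single_one (Fin n) R).comp _ (Fin.castLE_injective h)
  exact ⟨fun i => R ∙ v i, hv.iSupIndep_span_singleton,
    fun i => Submodule.span_singleton_eq_bot.not.2 (hv.ne_zero i)⟩

theorem Matrix.exists_ker_mulVecLin_eq {K : Type*} [Field K] {n : ℕ}
    (p : Submodule K (Fin n → K)) :
    ∃ (k : ℕ) (C : Matrix (Fin k) (Fin n) K), LinearMap.ker C.mulVecLin = p := by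
  let e := (finBasis K ((Fin n → K) ⧸ p)).equivFun
  refine ⟨_, LinearMap.toMatrix' (e.toLinearMap ∘ₗ p.mkQ), ?_⟩
  rw [← Matrix.toLin'_apply', Matrix.toLin'_toMatrix', LinearEquiv.ker_comp, Submodule.ker_mkQ]

theorem stmt_2_general (m n : ℕ) [NeZero m] :
    (∃ (k : Fin m → ℕ) (C : (i : Fin m) → Matrix (Fin (k i)) (Fin n) ℝ),
        (∀ i : Fin m, LinearMap.ker (C i).mulVecLin ≠ ⊥) ∧
        ∀ x : Fin m → (Fin n → ℝ),
          (∀ i : Fin m, (C i).mulVec (x i - x (i - 1)) = 0) → ∀ i j, x i = x j)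
      ↔ m ≤ n := by
  constructor
  · rintro ⟨k, C, hker, hwc⟩
    have hindep : iSupIndep fun i => LinearMap.ker (C i).mulVecLin :=
      (cycleWellConfigured_iff_iSupIndep _).1 hwc
    simpa using hindep.card_le_finrank_of_ne_bot hker
  · intro hmn
    obtain ⟨p, hp, hne⟩ := exists_iSupIndep_ne_bot ℝ hmn
    choose k C hC using fun i => Matrix.exists_ker_mulVecLin_eq (p i)
    refine ⟨k, C, by simpa only [hC] using hne, ?_⟩
    exact (cycleWellConfigured_iff_iSupIndep fun i => LinearMap.ker (C i).mulVecLin).2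
      (by simpa only [hC] using hp)

/-- For an `m`-vertex directed cycle (`0`-indexed, arc `(i-1, i)` carrying `C i`,
indices mod `m`), there exist matrices `C i` with `n` columns, all with nonzero kernel, making
the weighted cycle well-configured, iff `m ≤ n`. -/
theorem stmt_2 (m n : ℕ) [NeZero m] (hm : 2 ≤ m) :
    (∃ (k : Fin m → ℕ) (C : (i : Fin m) → Matrix (Fin (k i)) (Fin n) ℝ),
        (∀ i : Fin m, LinearMap.ker (C i).mulVecLin ≠ ⊥) ∧
        ∀ x : Fin m → (Fin n → ℝ),
          (∀ i : Fin m, (C i).mulVec (x i - x (i - 1)) = 0) → ∀ i j, x i = x j)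
      ↔ m ≤ n :=
  stmt_2_general m n
end

section
/- Let 1→2→⋯→m→1 be an m-vertex directed cycle (m ≥ 2) where each arc carries a real matrix C_i with n columns and full row rank, with K_i = kernel(C_i) and P_i = C_iᵀ(C_iC_iᵀ)^{−1}C_i. Suppose the weighted cycle is well-configured, i.e., the relations C_i(x_i − x_{i−1}) = 0 for all i imply x_1 = ⋯ = x_m (equivalently, the family {K_i : K_i ≠ {0}} is independent). Then for every initial state, the update x_i(t+1) = x_i(t) − (1/2) P_i (x_i(t) − x_{i−1}(t)), i ∈ {1,…,m} (indices mod m), leads all m agents to a consensus exponentially fast: there exist z ∈ ℝ^n, c ≥ 0 and ρ ∈ [0,1) such that ‖x_i(t) − z‖ ≤ c ρᵗ for all i and t. -/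
/-!
Stack the states as one vector of `(ℝⁿ)ᵐ`, let `P = diag(Pᵢ)` (an orthogonal projection) and let
`σ` be the cyclic shift `(σ x)ᵢ = xᵢ₋₁`; the update is `x ↦ x - ½ P (x - σ x)`. Its component
`(1 - P) x` never moves, and relative to an equilibrium with the same component the error stays
in `range P`, where the update acts as the averaged map `½ (1 + T)` of the contraction `T = P σ`.

For a contraction `T` of a finite-dimensional Hilbert space, `ker (1 - T) = (range (1 - T))ᗮ`.
So `½ (1 + T)` fixes `ker (1 - T)` pointwise, and on `range (1 - T)`, where `1 - T` is bounded
below, the parallelogram law makes it a strict contraction: the errors converge geometrically to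
a fixed point of `T`. The limit `y` satisfies `Pᵢ (yᵢ - yᵢ₋₁) = 0`, hence `Cᵢ (yᵢ - yᵢ₋₁) = 0`,
and well-configuredness turns it into a consensus.
-/

open Matrix
open scoped InnerProduct

namespace ContinuousLinearMap

section Hilbert

variable {𝕜 E : Type*} [RCLike 𝕜] [NormedAddCommGroup E] [InnerProductSpace 𝕜 E]

lemma orthogonal_range_one_sub_le_ker (S : E →L[𝕜] E) (hS : ‖S‖ ≤ 1) :
    (1 - S).rangeᗮ ≤ (1 - S).ker := by
  intro x hx
  have h0 : inner 𝕜 x ((1 - S) x) = 0 :=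
    Submodule.inner_left_of_mem_orthogonal (LinearMap.mem_range_self _ x) hx
  have hSx : inner 𝕜 (S x) x = inner 𝕜 x x := by
    rw [_root_.sub_apply, one_apply_eq_self, inner_sub_right, sub_eq_zero] at h0
    rw [← inner_conj_symm, ← h0, inner_conj_symm]
  have hfix : S x = x := eq_of_norm_le_re_inner_eq_norm_sq
    (by simpa using S.le_of_opNorm_le hS x) (by rw [hSx, inner_self_eq_norm_sq])
  simp [hfix]

/-- A contraction and its adjoint have the same fixed points: apply the previous lemma to `T` and
to `T†`. -/
lemma ker_one_sub_eq_orthogonal_range [CompleteSpace E] (T : E →L[𝕜] E) (hT : ‖T‖ ≤ 1) :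
    (1 - T).ker = (1 - T).rangeᗮ := by
  have key : ∀ S : E →L[𝕜] E, ‖S‖ ≤ 1 → (1 - S†).ker ≤ (1 - S).ker := fun S hS => by
    have := orthogonal_range_one_sub_le_ker S hS
    rwa [orthogonal_range, ← star_eq_adjoint, star_sub, star_one, star_eq_adjoint] at this
  rw [orthogonal_range, ← star_eq_adjoint, star_sub, star_one, star_eq_adjoint]
  refine le_antisymm ?_ (key T hT)
  simpa using key (adjoint T) (by simpa using hT)

lemma apply_mem_range_one_sub (T : E →L[𝕜] E) {v : E} (hv : v ∈ (1 - T).range) :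
    T v ∈ (1 - T).range := by
  obtain ⟨y, rfl⟩ := hv
  exact ⟨T y, by simp⟩

lemma apply_eq_self_of_mul_apply_eq {P : E →L[𝕜] E} (hP : IsIdempotentElem P) (σ : E →L[𝕜] E)
    {f : E} (hf : (P * σ) f = f) : P f = f := by
  rw [← hf]
  exact DFunLike.congr_fun hP.eq (σ f)

end Hilbert

variable {E : Type*} [NormedAddCommGroup E] [InnerProductSpace ℝ E] [FiniteDimensional ℝ E]

lemma range_one_sub_eq_orthogonal_ker (T : E →L[ℝ] E) (hT : ‖T‖ ≤ 1) :
    (1 - T).range = (1 - T).kerᗮ := by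
  rw [T.ker_one_sub_eq_orthogonal_range hT, Submodule.orthogonal_orthogonal]

lemma exists_norm_le_mul_norm_sub_of_mem_range (T : E →L[ℝ] E) (hT : ‖T‖ ≤ 1) :
    ∃ c : ℝ, 1 ≤ c ∧ ∀ v ∈ (1 - T).range, ‖v‖ ≤ c * ‖v - T v‖ := by
  set R := (1 - T).range
  have hker : LinearMap.ker ((1 - T : E →ₗ[ℝ] E).domRestrict R) = ⊥ := by
    rw [LinearMap.ker_eq_bot']
    intro v hv
    have hvN : (v : E) ∈ (1 - T).ker := hv
    rw [T.ker_one_sub_eq_orthogonal_range hT] at hvN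
    exact Subtype.ext (Submodule.disjoint_def.mp R.orthogonal_disjoint v v.2 hvN)
  obtain ⟨K, -, hK⟩ := LinearMap.exists_antilipschitzWith _ hker
  refine ⟨K + 1, by simp, fun v hv => ?_⟩
  have hv : ‖v‖ ≤ K * ‖v - T v‖ := by
    simpa [norm_sub_rev] using hK.le_mul_norm_sub ⟨v, hv⟩ 0
  nlinarith [norm_nonneg (v - T v)]

lemma exists_norm_midpoint_le_of_mem_range (T : E →L[ℝ] E) (hT : ‖T‖ ≤ 1) :
    ∃ ρ : ℝ, 0 ≤ ρ ∧ ρ < 1 ∧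
      ∀ v ∈ (1 - T).range, ‖(1 / 2 : ℝ) • (v + T v)‖ ≤ ρ * ‖v‖ := by
  obtain ⟨c, hc, hbound⟩ := T.exists_norm_le_mul_norm_sub_of_mem_range hT
  -- parallelogram law: `‖½ (v + T v)‖² ≤ ‖v‖² - ¼ ‖v - T v‖² ≤ (1 - 1 / (4 c²)) ‖v‖²`
  set r := 1 - 1 / (4 * c ^ 2)
  have hr0 : 0 ≤ r := by
    have : 1 / (4 * c ^ 2) ≤ 1 := by rw [div_le_one (by positivity)]; nlinarith
    linarith
  have hr1 : r < 1 := by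
    have : 0 < 1 / (4 * c ^ 2) := by positivity
    linarith
  refine ⟨√r, Real.sqrt_nonneg r, (Real.sqrt_lt' one_pos).mpr (by simpa using hr1),
    fun v hv => ?_⟩
  have hpar := parallelogram_law_with_norm ℝ v (T v)
  have hTv : ‖T v‖ ≤ ‖v‖ := by simpa using T.le_of_opNorm_le hT v
  have hsq : ‖(1 / 2 : ℝ) • (v + T v)‖ ^ 2 ≤ (√r * ‖v‖) ^ 2 := by
    rw [norm_smul, mul_pow, mul_pow, Real.sq_sqrt hr0]
    have h1 : ‖v‖ ^ 2 ≤ c ^ 2 * ‖v - T v‖ ^ 2 := by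
      rw [← mul_pow]; exact pow_le_pow_left₀ (norm_nonneg v) (hbound v hv) 2
    have h2 : ‖v‖ ^ 2 / (4 * c ^ 2) ≤ ‖v - T v‖ ^ 2 / 4 := by
      rw [div_le_iff₀ (by positivity)]; nlinarith
    have h3 : r * ‖v‖ ^ 2 = ‖v‖ ^ 2 - ‖v‖ ^ 2 / (4 * c ^ 2) := by ring
    rw [h3, show ‖(1 / 2 : ℝ)‖ ^ 2 = 1 / 4 by norm_num]
    nlinarith [norm_nonneg v, norm_nonneg (T v)]
  exact (pow_le_pow_iff_left₀ (norm_nonneg _) (by positivity) two_ne_zero).mp hsq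

lemma exists_fixed_norm_sub_le_of_midpoint_iterate (T : E →L[ℝ] E) (hT : ‖T‖ ≤ 1) :
    ∃ ρ : ℝ, 0 ≤ ρ ∧ ρ < 1 ∧ ∀ e : ℕ → E, (∀ t, e (t + 1) = (1 / 2 : ℝ) • (e t + T (e t))) →
      ∃ f, T f = f ∧ ∀ t, ‖e t - f‖ ≤ ρ ^ t * ‖e 0 - f‖ := by
  obtain ⟨ρ, hρ0, hρ1, hcontr⟩ := T.exists_norm_midpoint_le_of_mem_range hT
  refine ⟨ρ, hρ0, hρ1, fun e he => ?_⟩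
  obtain ⟨f, hfN, hef⟩ : ∃ f ∈ (1 - T).ker, e 0 - f ∈ (1 - T).kerᗮ :=
    ⟨_, (1 - T).ker.starProjection_apply_mem (e 0),
      (1 - T).ker.sub_starProjection_mem_orthogonal (e 0)⟩
  have hf : T f = f := (sub_eq_zero.mp (by simpa using hfN)).symm
  suffices key : ∀ t, e t - f ∈ (1 - T).range ∧ ‖e t - f‖ ≤ ρ ^ t * ‖e 0 - f‖ from
    ⟨f, hf, fun t => (key t).2⟩
  intro t
  induction t with
  | zero =>
    refine ⟨?_, by simp⟩
    rwa [T.range_one_sub_eq_orthogonal_ker hT]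
  | succ t ih =>
    obtain ⟨hmem, hle⟩ := ih
    have hstep : e (t + 1) - f = (1 / 2 : ℝ) • ((e t - f) + T (e t - f)) := by
      rw [he t, map_sub, hf]; module
    rw [hstep]
    refine ⟨Submodule.smul_mem _ _ (Submodule.add_mem _ hmem (T.apply_mem_range_one_sub hmem)),
      ?_⟩
    calc _ ≤ ρ * ‖e t - f‖ := hcontr _ hmem
      _ ≤ ρ * (ρ ^ t * ‖e 0 - f‖) := by gcongr
      _ = ρ ^ (t + 1) * ‖e 0 - f‖ := by ring

section ProjectedShift

variable {P σ : E →L[ℝ] E}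

lemma norm_mul_le_one_of_isStarProjection (hP : IsStarProjection P) (hσ : ‖σ‖ ≤ 1) :
    ‖P * σ‖ ≤ 1 :=
  (norm_mul_le _ _).trans (mul_le_one₀ (hP.norm_le P) (norm_nonneg _) hσ)

/-- The equilibrium is `w + u` with `w = x₀ - P x₀` and `(1 - P σ) u = P σ w`; this equation is
solvable because `w ∈ ker P` is orthogonal to the fixed points of `P σ`, which lie in `range P`. -/
lemma exists_equilibrium_sub_mem_range (hP : IsStarProjection P) (hσ : ‖σ‖ ≤ 1) (x₀ : E) :
    ∃ y : E, P (y - σ y) = 0 ∧ P (x₀ - y) = x₀ - y := by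
  set T := P * σ
  have hT : ‖T‖ ≤ 1 := norm_mul_le_one_of_isStarProjection hP hσ
  have hPP : ∀ v, P (P v) = P v := DFunLike.congr_fun hP.isIdempotentElem.eq
  set w := x₀ - P x₀
  have hPw : P w = 0 := by simp [w, hPP]
  have hw : w ∈ (1 - T).kerᗮ := by
    rw [Submodule.mem_orthogonal]
    intro f hf
    have hTf : T f = f := (sub_eq_zero.mp (by simpa using hf)).symm
    rw [← apply_eq_self_of_mul_apply_eq hP.isIdempotentElem σ hTf,
      ← hP.isSelfAdjoint.adjoint_eq, adjoint_inner_left, hPw, inner_zero_right]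
  obtain ⟨u, hu⟩ : T w ∈ (1 - T).range := by
    have hsub : (1 - T) w ∈ (1 - T).kerᗮ := by
      rw [← T.range_one_sub_eq_orthogonal_ker hT]; exact LinearMap.mem_range_self _ w
    rw [T.range_one_sub_eq_orthogonal_ker hT]
    simpa using Submodule.sub_mem _ hw hsub
  have hu' : u = T w + T u := by rw [← hu]; simp
  have hPu : P u = u := by rw [hu', ← map_add]; exact hPP _
  have hPσ : P (σ (w + u)) = u := by rw [map_add, map_add]; exact hu'.symm
  have hx₀ : x₀ - (w + u) = P x₀ - u := by simp only [w]; abel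
  refine ⟨w + u, ?_, ?_⟩
  · rw [map_sub, hPσ, map_add, hPw, hPu, zero_add, sub_self]
  · rw [hx₀, map_sub, hPP, hPu]

theorem exists_norm_sub_le_of_iterate_projected_shift (hP : IsStarProjection P)
    (hσ : ‖σ‖ ≤ 1) (x : ℕ → E) (hx : ∀ t, x (t + 1) = x t - (1 / 2 : ℝ) • P (x t - σ (x t))) :
    ∃ y : E, P (y - σ y) = 0 ∧
      ∃ c ρ : ℝ, 0 ≤ c ∧ 0 ≤ ρ ∧ ρ < 1 ∧ ∀ t, ‖x t - y‖ ≤ c * ρ ^ t := by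
  obtain ⟨y₀, hy₀, hx₀⟩ := exists_equilibrium_sub_mem_range hP hσ (x 0)
  obtain ⟨ρ, hρ0, hρ1, hconv⟩ := (P * σ).exists_fixed_norm_sub_le_of_midpoint_iterate
    (norm_mul_le_one_of_isStarProjection hP hσ)
  have hPP : ∀ v, P (P v) = P v := DFunLike.congr_fun hP.isIdempotentElem.eq
  set e := fun t => x t - y₀
  have hstep : ∀ t, P (e t) = e t → e (t + 1) = (1 / 2 : ℝ) • (e t + (P * σ) (e t)) := by
    intro t ht
    have hdiff : e t - σ (e t) = (x t - σ (x t)) - (y₀ - σ y₀) := by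
      simp only [e, map_sub]; abel
    have hPdiff : P (x t - σ (x t)) = e t - (P * σ) (e t) := by
      rw [← sub_zero (P (x t - σ (x t))), ← hy₀, ← map_sub, ← hdiff, map_sub, ht]; rfl
    simp only [e, hx t, hPdiff]
    module
  have hinv : ∀ t, P (e t) = e t := by
    intro t
    induction t with
    | zero => exact hx₀
    | succ t ih =>
      rw [hstep t ih, map_smul, map_add, ih]
      exact congrArg _ (congrArg _ (hPP (σ (e t))))
  obtain ⟨f, hf, hbound⟩ := hconv e (fun t => hstep t (hinv t))
  refine ⟨y₀ + f, ?_, ‖e 0 - f‖, ρ, norm_nonneg _, hρ0, hρ1, fun t => ?_⟩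
  · rw [map_add σ, add_sub_add_comm, map_add, hy₀, zero_add, map_sub,
      apply_eq_self_of_mul_apply_eq hP.isIdempotentElem σ hf]
    exact sub_eq_zero.mpr hf.symm
  · rw [mul_comm, ← sub_sub]
    exact hbound t

end ProjectedShift

end ContinuousLinearMap

namespace Matrix

variable {ι κ : Type*} [Fintype ι] [Fintype κ] [DecidableEq κ]

lemma isUnit_mul_transpose_of_rank_eq (C : Matrix κ ι ℝ) (h : C.rank = Fintype.card κ) :
    IsUnit (C * Cᵀ) := by
  have hrange : Module.finrank ℝ (LinearMap.range (C * Cᵀ).mulVecLin) =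
      Module.finrank ℝ (κ → ℝ) := by
    rw [← rank, rank_self_mul_transpose, h, Module.finrank_fintype_fun_eq_card]
  rw [← mulVec_surjective_iff_isUnit]
  exact LinearMap.range_eq_top.mp (Submodule.eq_top_of_finrank_eq hrange)

lemma mul_transpose_mul_inv_mul_self (C : Matrix κ ι ℝ) (h : IsUnit (C * Cᵀ)) :
    C * (Cᵀ * (C * Cᵀ)⁻¹ * C) = C := by
  rw [← Matrix.mul_assoc, ← Matrix.mul_assoc,
    mul_nonsing_inv _ ((isUnit_iff_isUnit_det _).mp h), Matrix.one_mul]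

lemma isStarProjection_transpose_mul_inv_mul (C : Matrix κ ι ℝ) (h : IsUnit (C * Cᵀ)) :
    IsStarProjection (Cᵀ * (C * Cᵀ)⁻¹ * C) where
  isIdempotentElem := by
    rw [IsIdempotentElem, Matrix.mul_assoc _ C, mul_transpose_mul_inv_mul_self C h]
  isSelfAdjoint := by
    rw [IsSelfAdjoint, star_eq_conjTranspose, conjTranspose_eq_transpose_of_trivial,
      transpose_mul, transpose_mul, transpose_nonsing_inv, transpose_mul, transpose_transpose,
      Matrix.mul_assoc]

variable {o α : Type*} [Fintype o] [DecidableEq o]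

lemma isStarProjection_blockDiagonal [DecidableEq ι] [CommRing α] [StarRing α] (M : o → Matrix ι ι α)
    (hM : ∀ k, IsStarProjection (M k)) : IsStarProjection (blockDiagonal M) where
  isIdempotentElem := by
    rw [IsIdempotentElem, ← blockDiagonal_mul]
    exact congrArg blockDiagonal (funext fun k => (hM k).isIdempotentElem.eq)
  isSelfAdjoint := by
    rw [IsSelfAdjoint, star_eq_conjTranspose, blockDiagonal_conjTranspose]
    exact congrArg blockDiagonal (funext fun k => (hM k).isSelfAdjoint.star_eq)

lemma blockDiagonal_mulVec_apply [CommRing α] (M : o → Matrix ι ι α) (v : ι × o → α) (a : ι)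
    (k : o) : (blockDiagonal M *ᵥ v) (a, k) = (M k *ᵥ fun b => v (b, k)) a := by
  simp [mulVec, dotProduct, Fintype.sum_prod_type, blockDiagonal_apply]

end Matrix

section Cycle

variable {m n : ℕ} [NeZero m]

/-- The states `x : Fin m → Fin n → ℝ` are stored as vectors indexed by `(a, i) : Fin n × Fin m`,
the index order for which `blockDiagonal` of the family `Pᵢ` acts on agent `i`. -/
noncomputable def cyclicShift (n m : ℕ) [NeZero m] :
    EuclideanSpace ℝ (Fin n × Fin m) →L[ℝ] EuclideanSpace ℝ (Fin n × Fin m) :=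
  (LinearIsometryEquiv.piLpCongrLeft 2 ℝ ℝ
    (Equiv.prodCongr (Equiv.refl _) (Equiv.addRight 1))).toLinearIsometry.toContinuousLinearMap

lemma norm_cyclicShift_le : ‖cyclicShift n m‖ ≤ 1 :=
  LinearIsometry.norm_toContinuousLinearMap_le _

lemma cyclicShift_apply (v : EuclideanSpace ℝ (Fin n × Fin m)) (a : Fin n) (i : Fin m) :
    cyclicShift n m v (a, i) = v (a, i - 1) := by
  simp [cyclicShift, Equiv.piCongrLeft'_apply, sub_eq_add_neg]

lemma toEuclideanCLM_blockDiagonal_sub_cyclicShift_apply (P : Fin m → Matrix (Fin n) (Fin n) ℝ)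
    (v : EuclideanSpace ℝ (Fin n × Fin m)) (a : Fin n) (i : Fin m) :
    toEuclideanCLM (𝕜 := ℝ) (blockDiagonal P) (v - cyclicShift n m v) (a, i) =
      (P i *ᵥ fun b => v (b, i) - v (b, i - 1)) a := by
  simp only [map_sub, PiLp.sub_apply, ofLp_toEuclideanCLM, blockDiagonal_mulVec_apply,
    cyclicShift_apply, ← Pi.sub_apply, ← mulVec_sub]
  rfl

theorem exists_norm_sub_le_of_cycle_iterate (P : Fin m → Matrix (Fin n) (Fin n) ℝ)
    (hP : ∀ i, IsStarProjection (P i)) (x : ℕ → Fin m → Fin n → ℝ)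
    (hx : ∀ t i, x (t + 1) i = x t i - (1 / 2 : ℝ) • P i *ᵥ (x t i - x t (i - 1))) :
    ∃ y : Fin m → Fin n → ℝ, (∀ i, P i *ᵥ (y i - y (i - 1)) = 0) ∧
      ∃ c ρ : ℝ, 0 ≤ c ∧ 0 ≤ ρ ∧ ρ < 1 ∧ ∀ i t, ‖x t i - y i‖ ≤ c * ρ ^ t := by
  have hQ : IsStarProjection (toEuclideanCLM (𝕜 := ℝ) (blockDiagonal P)) :=
    (isStarProjection_blockDiagonal P hP).map _
  let X : ℕ → EuclideanSpace ℝ (Fin n × Fin m) := fun t => WithLp.toLp 2 fun p => x t p.2 p.1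
  have hX : ∀ t, X (t + 1) = X t - (1 / 2 : ℝ) •
      toEuclideanCLM (𝕜 := ℝ) (blockDiagonal P) (X t - cyclicShift n m (X t)) := by
    intro t
    ext ⟨a, i⟩
    rw [PiLp.sub_apply, PiLp.smul_apply, toEuclideanCLM_blockDiagonal_sub_cyclicShift_apply]
    show x (t + 1) i a = x t i a - (1 / 2 : ℝ) • (P i *ᵥ (x t i - x t (i - 1))) a
    rw [hx t i]
    rfl
  obtain ⟨Y, hY, c, ρ, hc, hρ0, hρ1, hconv⟩ :=
    ContinuousLinearMap.exists_norm_sub_le_of_iterate_projected_shift hQ norm_cyclicShift_le X hX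
  refine ⟨fun i a => Y (a, i), fun i => ?_, c, ρ, hc, hρ0, hρ1, fun i t => ?_⟩
  · ext a
    have := congrArg (· (a, i)) hY
    rwa [toEuclideanCLM_blockDiagonal_sub_cyclicShift_apply] at this
  · refine (pi_norm_le_iff_of_nonneg ((norm_nonneg _).trans (hconv t))).mpr fun a => ?_
    exact (PiLp.norm_apply_le (X t - Y) (a, i)).trans (hconv t)

end Cycle

theorem stmt_15_general (m n : ℕ) [NeZero m] (k : Fin m → ℕ)
    (C : (i : Fin m) → Matrix (Fin (k i)) (Fin n) ℝ)
    (hrank : ∀ i, (C i).rank = k i)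
    (hwc : ∀ y : Fin m → (Fin n → ℝ),
      (∀ i : Fin m, (C i).mulVec (y i - y (i - 1)) = 0) → ∀ i j, y i = y j)
    (x : ℕ → Fin m → (Fin n → ℝ))
    (hupd : ∀ t (i : Fin m), x (t + 1) i = x t i -
      (1 / 2 : ℝ) • ((C i)ᵀ * (C i * (C i)ᵀ)⁻¹ * C i).mulVec (x t i - x t (i - 1))) :
    ∃ (z : Fin n → ℝ) (c ρ : ℝ), 0 ≤ c ∧ 0 ≤ ρ ∧ ρ < 1 ∧
      ∀ (i : Fin m) (t : ℕ), ‖x t i - z‖ ≤ c * ρ ^ t := by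
  have hunit : ∀ i, IsUnit (C i * (C i)ᵀ) := fun i =>
    (C i).isUnit_mul_transpose_of_rank_eq (by simpa using hrank i)
  obtain ⟨y, hy, c, ρ, hc, hρ0, hρ1, hconv⟩ :=
    exists_norm_sub_le_of_cycle_iterate (fun i => (C i)ᵀ * (C i * (C i)ᵀ)⁻¹ * C i)
      (fun i => (C i).isStarProjection_transpose_mul_inv_mul (hunit i)) x hupd
  have hcons : ∀ i j, y i = y j := hwc y fun i => by
    rw [← mul_transpose_mul_inv_mul_self (C i) (hunit i), ← mulVec_mulVec, hy i, mulVec_zero]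
  exact ⟨y 0, c, ρ, hc, hρ0, hρ1, fun i t => hcons i 0 ▸ hconv i t⟩

/-- On the directed cycle `0 → 1 → ⋯ → m-1 → 0` (`m ≥ 2`, matrix `C i` with full
row rank on the arc `(i-1, i)`, indices mod `m`), if the weighted cycle is well-configured
(local agreement implies consensus), then for every initial state the update
`x i (t+1) = x i t − (1/2) P i (x i t − x (i-1) t)`, with `Pᵢ = Cᵢᵀ(CᵢCᵢᵀ)⁻¹Cᵢ`, reaches a
consensus exponentially fast. -/
theorem stmt_15 (m n : ℕ) [NeZero m] (hm : 2 ≤ m) (k : Fin m → ℕ)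
    (C : (i : Fin m) → Matrix (Fin (k i)) (Fin n) ℝ)
    (hrank : ∀ i, (C i).rank = k i)
    (hwc : ∀ y : Fin m → (Fin n → ℝ),
      (∀ i : Fin m, (C i).mulVec (y i - y (i - 1)) = 0) → ∀ i j, y i = y j)
    (x : ℕ → Fin m → (Fin n → ℝ))
    (hupd : ∀ t (i : Fin m), x (t + 1) i = x t i -
      (1 / 2 : ℝ) • ((C i)ᵀ * (C i * (C i)ᵀ)⁻¹ * C i).mulVec (x t i - x t (i - 1))) :
    ∃ (z : Fin n → ℝ) (c ρ : ℝ), 0 ≤ c ∧ 0 ≤ ρ ∧ ρ < 1 ∧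
      ∀ (i : Fin m) (t : ℕ), ‖x t i - z‖ ≤ c * ρ ^ t :=
  stmt_15_general m n k C hrank hwc x hupd
end
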